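/- Two terminating impartial games G and H satisfy Γ₁(G) = Γ₁(H) if and only if for all ordinals λ and ρ, the games *λ + (G : *ρ) and *λ + (H : *ρ) have the same outcome; more precisely, Γ₀(*λ + (G : *ρ)) = λ ⊕ ex_ρ(Γ₁(G)), so the outcomes of these games over all λ, ρ determine Γ₁(G). -/

import Mathlib

/-! Combinatorial game theory (`SetTheory.PGame`, `Nimber`, `grundyValue`, `nim`,
`Impartial`) has been removed from Mathlib; the notions below restate the
December 2024 Mathlib definitions with their old meaning. -/

universe u

/-- Pre-games (as in Mathlib, December 2024). -/
inductive SetTheory.PGame : Type (u + 1)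
  | mk : ∀ α β : Type u, (α → SetTheory.PGame) → (β → SetTheory.PGame) → SetTheory.PGame

namespace SetTheory

namespace PGame

/-- The indexing type for allowable moves by Left. -/
def LeftMoves : PGame.{u} → Type u
  | mk l _ _ _ => l

/-- The indexing type for allowable moves by Right. -/
def RightMoves : PGame.{u} → Type u
  | mk _ r _ _ => r

/-- The new game after Left makes an allowed move. -/
def moveLeft : ∀ g : PGame.{u}, LeftMoves g → PGame.{u}
  | mk _l _ L _ => L

/-- The new game after Right makes an allowed move. -/
def moveRight : ∀ g : PGame.{u}, RightMoves g → PGame.{u}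
  | mk _ _r _ R => R

/-- Auxiliary pair `(x ≤ y, y ≤ x)`, defined by simultaneous recursion:
`x ≤ y ↔ (∀ i, ¬ y ≤ x.moveLeft i) ∧ ∀ j, ¬ y.moveRight j ≤ x`. -/
noncomputable def leAux : PGame.{u} → PGame.{u} → Prop × Prop :=
  fun x => PGame.rec (motive := fun _ => PGame.{u} → Prop × Prop)
    (fun _xl _xr _xL _xR IHL IHR y =>
      PGame.rec (motive := fun _ => Prop × Prop)
        (fun yl yr yL yR JL JR =>
          ((∀ i, ¬ (IHL i (mk yl yr yL yR)).2) ∧ ∀ j, ¬ (JR j).2,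
            (∀ k, ¬ (JL k).1) ∧ ∀ j, ¬ (IHR j (mk yl yr yL yR)).1)) y) x

noncomputable instance : LE PGame.{u} := ⟨fun x y => (leAux x y).1⟩

noncomputable instance : HasEquiv PGame.{u} := ⟨fun x y => x ≤ y ∧ y ≤ x⟩

/-- The negation of a pre-game. -/
def neg : PGame.{u} → PGame.{u}
  | mk l r L R => mk r l (fun i => neg (R i)) fun i => neg (L i)

instance : Neg PGame.{u} := ⟨neg⟩

/-- The sum of pre-games: moves are `xL + y` and `x + yL`. -/
noncomputable def add : PGame.{u} → PGame.{u} → PGame.{u} :=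
  fun x => PGame.rec (motive := fun _ => PGame.{u} → PGame.{u})
    (fun xl xr _xL _xR IHxl IHxr y =>
      PGame.rec (motive := fun _ => PGame.{u})
        (fun yl yr _yL _yR IHyl IHyr =>
          mk (xl ⊕ yl) (xr ⊕ yr) (Sum.elim (fun i => IHxl i (mk yl yr _yL _yR)) IHyl)
            (Sum.elim (fun i => IHxr i (mk yl yr _yL _yR)) IHyr)) y) x

noncomputable instance : Add PGame.{u} := ⟨add⟩

/-- Auxiliary for impartiality. -/
def ImpartialAux : PGame.{u} → Prop
  | mk l r L R => (mk l r L R ≈ -mk l r L R) ∧ (∀ i, ImpartialAux (L i)) ∧ ∀ j, ImpartialAux (R j)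

/-- An impartial game is equivalent to its negative, and so are all its options. -/
class Impartial (G : PGame.{u}) : Prop where
  out : ImpartialAux G

/-- The nim game `nim o`: both players may move to `nim o'` for any `o' < o`. -/
noncomputable def nim : Ordinal.{u} → PGame.{u}
  | o => mk o.ToType o.ToType (fun x => nim (Ordinal.ToType.toOrd x).1)
      (fun x => nim (Ordinal.ToType.toOrd x).1)
termination_by o => o
decreasing_by
  · exact (Ordinal.ToType.toOrd x).2
  · exact (Ordinal.ToType.toOrd x).2

end PGame

end SetTheory

/-- Nimbers: ordinals with nimber arithmetic (as in Mathlib, December 2024). -/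
def Nimber : Type (u + 1) := Ordinal.{u}

namespace Nimber

noncomputable instance : ConditionallyCompleteLinearOrderBot Nimber.{u} :=
  inferInstanceAs (ConditionallyCompleteLinearOrderBot Ordinal.{u})

instance : WellFoundedRelation Nimber.{u} := inferInstanceAs (WellFoundedRelation Ordinal.{u})

end Nimber

/-- The identity `Ordinal ≃o Nimber`. -/
def Ordinal.toNimber : Ordinal.{u} ≃o Nimber.{u} := OrderIso.refl _

prefix:75 "∗" => Ordinal.toNimber

namespace Nimber

noncomputable instance : Zero Nimber.{u} := ⟨∗(0 : Ordinal.{u})⟩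

/-- Nimber addition: `a + b = mex {a' + b, a + b' | a' < a, b' < b}`. -/
noncomputable def add (a b : Nimber.{u}) : Nimber.{u} :=
  sInf {x | (∃ a' : Set.Iio a, Nimber.add a'.1 b = x) ∨ ∃ b' : Set.Iio b, Nimber.add a b'.1 = x}ᶜ
termination_by (a, b)
decreasing_by
  · exact Prod.Lex.left _ _ a'.2
  · exact Prod.Lex.right _ b'.2

noncomputable instance : Add Nimber.{u} := ⟨Nimber.add⟩

end Nimber

namespace SetTheory.PGame

/-- The Grundy value of a game: the mex of the Grundy values of its left options. -/
noncomputable def grundyValue : PGame.{u} → Nimber.{u}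
  | mk _ _ L _ => sInf (Set.range fun i => grundyValue (L i))ᶜ

end SetTheory.PGame

open SetTheory PGame Nimber

/-- The ordinal sum `G : H` of games: its options are `G : H'` for options `H'` of `H`,
and `G'` for options `G'` of `G` (discarding `H`). -/
def osum (G : PGame) : PGame → PGame
  | PGame.mk l r L R =>
    PGame.mk (G.LeftMoves ⊕ l) (G.RightMoves ⊕ r)
      (Sum.elim G.moveLeft fun j => osum G (L j))
      (Sum.elim G.moveRight fun j => osum G (R j))

/-- The Grundy set `Γ₁(G)`: the set of Grundy numbers of the options of `G`. -/
def grundySet (G : PGame) : Set Nimber :=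
  Set.range fun i => grundyValue (G.moveLeft i)

/-- The ρ-th excluded ordinal of a set `Λ`:
`ex_ρ(Λ) = mex (Λ ∪ { ex_μ(Λ) | μ < ρ })`, where `mex` is the minimal excludant
(least element of the complement). -/
noncomputable def exc (Λ : Set Nimber) : Nimber → Nimber := fun ρ =>
  sInf {a | a ∉ Λ ∧ ∀ μ < ρ, exc Λ μ ≠ a}
termination_by ρ => ρ

/-! The Grundy value is additive over disjunctive sums and `Γ₀(*λ) = λ`. The options of `G : *ρ`
have Grundy values `Γ₁(G) ∪ {Γ₀(G : *μ) | μ < ρ}`, so induction on `ρ` gives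
`Γ₀(G : *ρ) = ex_ρ(Γ₁(G))`. As `ρ ↦ ex_ρ(Λ)` enumerates `Λᶜ` increasingly, it determines `Λ`;
and `ex_ρ(Γ₁(G))` is read off from outcomes as the unique `λ` for which `*λ + (G : *ρ)` is a
second-player win, because `λ ⊕ μ = 0` iff `λ = μ`. -/

section Mex

variable {α : Type*} [ConditionallyCompleteLinearOrderBot α] {s : Set α} {a : α}

theorem sInf_compl_eq_of_Iio_subset (ha : a ∉ s) (h : Set.Iio a ⊆ s) : sInf sᶜ = a :=
  le_antisymm (csInf_le (OrderBot.bddBelow _) ha)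
    (le_csInf ⟨a, ha⟩ fun _ hb => not_lt.1 fun hlt => hb (h hlt))

theorem mem_of_lt_sInf_compl (h : a < sInf sᶜ) : a ∈ s :=
  not_not.1 (notMem_of_lt_csInf h (OrderBot.bddBelow _))

end Mex

namespace Nimber

instance small_Iio (a : Nimber.{u}) : Small.{u} (Set.Iio a) := Ordinal.small_Iio a

instance : WellFoundedLT Nimber.{u} := inferInstanceAs (WellFoundedLT Ordinal.{u})

theorem nonempty_compl_of_small (s : Set Nimber.{u}) [Small.{u} s] : sᶜ.Nonempty := by
  obtain ⟨a, ha⟩ := @Ordinal.bddAbove_of_small s ‹_›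
  exact ⟨∗(Order.succ a), fun hs => (Order.lt_succ a).not_ge (ha hs)⟩

theorem add_def (a b : Nimber.{u}) :
    a + b = sInf ((· + b) '' Set.Iio a ∪ (a + ·) '' Set.Iio b)ᶜ := by
  change Nimber.add a b = _
  rw [Nimber.add]
  congr
  ext x
  change _ ↔ x ∈ (_ : Set Nimber.{u})
  simp only [Set.mem_image, Set.mem_Iio, Subtype.exists, exists_prop]
  rfl

theorem add_notMem (a b : Nimber.{u}) : a + b ∉ (· + b) '' Set.Iio a ∪ (a + ·) '' Set.Iio b := by
  rw [add_def a b]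
  exact csInf_mem (nonempty_compl_of_small _)

theorem add_ne_add_left {a a' : Nimber.{u}} (b : Nimber.{u}) (h : a' < a) : a' + b ≠ a + b :=
  fun he => add_notMem a b (Or.inl ⟨a', h, he⟩)

theorem add_ne_add_right (a : Nimber.{u}) {b b' : Nimber.{u}} (h : b' < b) : a + b' ≠ a + b :=
  fun he => add_notMem a b (Or.inr ⟨b', h, he⟩)

theorem add_right_cancel {a b c : Nimber.{u}} (h : a + c = b + c) : a = b := by
  rcases lt_trichotomy a b with hab | hab | hab
  · exact absurd h (add_ne_add_left c hab)
  · exact hab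
  · exact absurd h.symm (add_ne_add_left c hab)

theorem add_left_cancel {a b c : Nimber.{u}} (h : a + b = a + c) : b = c := by
  rcases lt_trichotomy b c with hbc | hbc | hbc
  · exact absurd h (add_ne_add_right a hbc)
  · exact hbc
  · exact absurd h.symm (add_ne_add_right a hbc)

theorem exists_of_lt_add {a b c : Nimber.{u}} (h : c < a + b) :
    (∃ a' < a, a' + b = c) ∨ ∃ b' < b, a + b' = c := by
  rw [add_def] at h
  obtain ⟨a', ha, he⟩ | ⟨b', hb, he⟩ := mem_of_lt_sInf_compl h
  exacts [Or.inl ⟨a', ha, he⟩, Or.inr ⟨b', hb, he⟩]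

theorem add_self (a : Nimber.{u}) : a + a = 0 := by
  induction a using WellFoundedLT.induction with
  | ind a ih =>
  rw [add_def]
  refine sInf_compl_eq_of_Iio_subset ?_ fun c hc => (not_lt_bot (a := c) hc).elim
  rintro (⟨a', ha, he⟩ | ⟨a', ha, he⟩)
  · exact add_ne_add_right a' ha ((ih a' ha).trans he.symm)
  · exact add_ne_add_left a' ha ((ih a' ha).trans he.symm)

theorem add_eq_zero_iff {a b : Nimber.{u}} : a + b = 0 ↔ a = b :=
  ⟨fun h => (add_left_cancel (h.trans (add_self a).symm)).symm, fun h => h ▸ add_self a⟩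

end Nimber

namespace SetTheory.PGame

instance small_grundySet (G : PGame.{u}) : Small.{u} (grundySet G) := by
  unfold grundySet
  infer_instance

theorem grundyValue_eq_sInf_compl_grundySet (G : PGame.{u}) :
    grundyValue G = sInf (grundySet G)ᶜ := by
  cases G
  rfl

theorem grundyValue_notMem_grundySet (G : PGame.{u}) : grundyValue G ∉ grundySet G := by
  rw [grundyValue_eq_sInf_compl_grundySet]
  exact csInf_mem (Nimber.nonempty_compl_of_small _)

theorem grundyValue_moveLeft_ne (G : PGame.{u}) (i : G.LeftMoves) :
    grundyValue (G.moveLeft i) ≠ grundyValue G :=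
  fun h => grundyValue_notMem_grundySet G ⟨i, h⟩

theorem exists_grundyValue_moveLeft_eq {G : PGame.{u}} {a : Nimber.{u}} (h : a < grundyValue G) :
    ∃ i, grundyValue (G.moveLeft i) = a := by
  rw [grundyValue_eq_sInf_compl_grundySet] at h
  exact mem_of_lt_sInf_compl (s := grundySet G) h

theorem grundyValue_eq_of_Iio_subset {G : PGame.{u}} {a : Nimber.{u}} (ha : a ∉ grundySet G)
    (h : Set.Iio a ⊆ grundySet G) : grundyValue G = a := by
  rw [grundyValue_eq_sInf_compl_grundySet]
  exact sInf_compl_eq_of_Iio_subset ha h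

theorem grundyValue_add (G H : PGame.{u}) :
    grundyValue (G + H) = grundyValue G + grundyValue H := by
  induction G generalizing H with
  | mk xl xr xL xR ihl _ =>
  induction H with
  | mk yl yr yL yR ihr _ =>
  refine grundyValue_eq_of_Iio_subset ?_ fun c hc => ?_
  · rintro ⟨i | j, h⟩
    · exact grundyValue_moveLeft_ne (mk xl xr xL xR) i
        (Nimber.add_right_cancel ((ihl i _).symm.trans h))
    · exact grundyValue_moveLeft_ne (mk yl yr yL yR) j
        (Nimber.add_left_cancel ((ihr j).symm.trans h))
  · rcases Nimber.exists_of_lt_add hc with ⟨a', ha, rfl⟩ | ⟨b', hb, rfl⟩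
    · obtain ⟨i, rfl⟩ := exists_grundyValue_moveLeft_eq ha
      exact ⟨Sum.inl i, ihl i _⟩
    · obtain ⟨j, rfl⟩ := exists_grundyValue_moveLeft_eq hb
      exact ⟨Sum.inr j, ihr j⟩

theorem range_moveLeft_nim {β : Type*} (f : PGame.{u} → β) (o : Ordinal.{u}) :
    Set.range (fun j => f ((nim o).moveLeft j)) = (fun o' => f (nim o')) '' Set.Iio o := by
  rw [nim]
  ext x
  constructor
  · rintro ⟨j, rfl⟩
    exact ⟨_, (Ordinal.ToType.toOrd j).2, rfl⟩
  · rintro ⟨o', ho', rfl⟩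
    refine ⟨Ordinal.ToType.mk ⟨o', ho'⟩, ?_⟩
    simp [moveLeft]

theorem grundyValue_nim (o : Ordinal.{u}) : grundyValue (nim o) = ∗o := by
  induction o using WellFoundedLT.induction with
  | ind o ih =>
  rw [grundyValue_eq_sInf_compl_grundySet, grundySet, range_moveLeft_nim grundyValue,
    Set.image_congr (s := Set.Iio o) ih, Ordinal.toNimber.image_Iio, Set.compl_Iio, csInf_Ici]

end SetTheory.PGame

section Exc

variable (Λ : Set Nimber.{u})

theorem exc_eq_sInf_compl (ρ : Nimber.{u}) :
    exc Λ ρ = sInf (Λ ∪ exc.{u, u} Λ '' Set.Iio ρ)ᶜ := by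
  rw [exc]
  congr
  ext a
  simp

variable [Small.{u} Λ]

theorem exc_mem_compl (ρ : Nimber.{u}) : exc Λ ρ ∈ (Λ ∪ exc.{u, u} Λ '' Set.Iio ρ)ᶜ := by
  rw [exc_eq_sInf_compl Λ ρ]
  exact csInf_mem (Nimber.nonempty_compl_of_small _)

theorem exc_notMem (ρ : Nimber.{u}) : exc Λ ρ ∉ Λ :=
  fun h => exc_mem_compl Λ ρ (Or.inl h)

theorem exc_strictMono : StrictMono (exc.{u, u} Λ) := by
  intro μ ρ hμρ
  refine lt_of_le_of_ne ?_ fun h => exc_mem_compl Λ ρ (Or.inr ⟨μ, hμρ, h⟩)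
  rw [exc_eq_sInf_compl Λ μ, exc_eq_sInf_compl Λ ρ]
  exact csInf_le_csInf (OrderBot.bddBelow _) (Nimber.nonempty_compl_of_small _)
    (Set.compl_subset_compl.2 (Set.union_subset_union_right _
      (Set.image_mono (Set.Iio_subset_Iio hμρ.le))))

theorem range_exc : Set.range (exc.{u, u} Λ) = Λᶜ := by
  refine subset_antisymm (Set.range_subset_iff.2 (exc_notMem Λ)) fun a ha => ?_
  by_contra hr
  have hle : exc Λ a ≤ a := by
    rw [exc_eq_sInf_compl]
    exact csInf_le (OrderBot.bddBelow _) fun h => h.elim ha fun ⟨μ, _, hμ⟩ => hr ⟨μ, hμ⟩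
  exact hr ⟨a, le_antisymm hle (exc_strictMono Λ).le_apply⟩

end Exc

theorem eq_of_exc_eq {Λ₁ Λ₂ : Set Nimber.{u}} [Small.{u} Λ₁] [Small.{u} Λ₂]
    (h : exc.{u, u} Λ₁ = exc Λ₂) : Λ₁ = Λ₂ :=
  compl_injective (by rw [← range_exc, ← range_exc, h])

theorem grundySet_osum (G H : PGame.{u}) : grundySet (osum G H) =
    grundySet G ∪ Set.range fun j => grundyValue (osum G (H.moveLeft j)) := by
  cases H
  exact (congrArg Set.range (Sum.comp_elim grundyValue _ _)).trans (Set.Sum.elim_range _ _)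

theorem grundyValue_osum_nim (G : PGame.{u}) (o : Ordinal.{u}) :
    grundyValue (osum G (nim o)) = exc (grundySet G) (∗o) := by
  induction o using WellFoundedLT.induction with
  | ind o ih =>
  rw [grundyValue_eq_sInf_compl_grundySet, grundySet_osum,
    range_moveLeft_nim (fun H => grundyValue (osum G H)), Set.image_congr (s := Set.Iio o) ih,
    ← Set.image_image, Ordinal.toNimber.image_Iio, exc_eq_sInf_compl]

theorem grundyValue_nim_add_osum_nim (G : PGame.{u}) (lam rho : Ordinal.{u}) :
    grundyValue (nim lam + osum G (nim rho)) = ∗lam + exc (grundySet G) (∗rho) := by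
  rw [grundyValue_add, grundyValue_nim, grundyValue_osum_nim]

theorem grundyValue_nim_add_osum_nim_eq_zero_iff (G : PGame.{u}) (lam rho : Ordinal.{u}) :
    grundyValue (nim lam + osum G (nim rho)) = 0 ↔ ∗lam = exc (grundySet G) (∗rho) := by
  rw [grundyValue_nim_add_osum_nim, Nimber.add_eq_zero_iff]

theorem grundySet_eq_iff_nim_osum_outcomes_general (G H : PGame.{0}) :
    (grundySet G = grundySet H ↔
      ∀ lam rho : Ordinal.{0},
        (grundyValue (nim lam + osum G (nim rho)) = 0 ↔
          grundyValue (nim lam + osum H (nim rho)) = 0)) ∧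
    ∀ lam rho : Ordinal.{0},
      grundyValue (nim lam + osum G (nim rho)) = ∗lam + exc (grundySet G) (∗rho) := by
  refine ⟨⟨fun hGH lam rho => ?_, fun hout => eq_of_exc_eq (funext fun ρ => ?_)⟩,
    grundyValue_nim_add_osum_nim G⟩
  · simp only [grundyValue_nim_add_osum_nim_eq_zero_iff, hGH]
  · -- `λ := ex_ρ(Γ₁(G))` makes the `G`-game a second-player win.
    have h := hout (Ordinal.toNimber.symm (exc (grundySet G) ρ)) (Ordinal.toNimber.symm ρ)
    simp only [grundyValue_nim_add_osum_nim_eq_zero_iff, OrderIso.apply_symm_apply] at h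
    exact h.1 trivial

/-- `Γ₁(G) = Γ₁(H)` iff the games `*λ + (G : *ρ)` and `*λ + (H : *ρ)` have the
same outcome for all ordinals `λ, ρ`; more precisely
`Γ₀(*λ + (G : *ρ)) = λ ⊕ ex_ρ(Γ₁(G))` (so these outcomes determine `Γ₁(G)`). -/
theorem grundySet_eq_iff_nim_osum_outcomes (G H : PGame.{0}) [G.Impartial] [H.Impartial] :
    (grundySet G = grundySet H ↔
      ∀ lam rho : Ordinal.{0},
        (grundyValue (nim lam + osum G (nim rho)) = 0 ↔
          grundyValue (nim lam + osum H (nim rho)) = 0)) ∧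
    ∀ lam rho : Ordinal.{0},
      grundyValue (nim lam + osum G (nim rho)) = ∗lam + exc (grundySet G) (∗rho) :=
  grundySet_eq_iff_nim_osum_outcomes_general G H
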